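/- Let g : [0,∞) → [0,∞) be continuous, increasing, positive for large arguments, with G(s) = ∫_0^s g(τ)dτ, and assume the Keller–Osserman condition ∫_{r₀}^∞ ds/√(G(s)) < ∞ for some r₀ > 0. Then lim_{s→∞} s/√(G(s)) = 0, lim_{s→∞} s/g(s) = 0, and lim_{s→∞} √(G(s))/g(s) = 0. -/

import Mathlib

/-! For large `s`, `G` is positive and increasing, so `f = 1 / √G` is antitone and integrable on a
half-line. For such `f`, `∫ t..2t, f ≤ t f(t) ≤ 2 ∫ t/2..t, f`, and both bounds are tails of a
convergent integral, so `s / √G(s) → 0`. Monotonicity of `g` gives `G(s) ≤ s g(s)`, whence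
`s / g ≤ (s / √G)²` and `√G / g ≤ s / √G`. -/

open Set MeasureTheory Filter Topology

theorem MonotoneOn.mul_le_intervalIntegral {f : ℝ → ℝ} {a b : ℝ} (hf : MonotoneOn f (Icc a b))
    (hab : a ≤ b) : (b - a) * f a ≤ ∫ x in a..b, f x := by
  have hfi : IntervalIntegrable f volume a b := (hf.mono (uIcc_of_le hab).subset).intervalIntegrable
  calc (b - a) * f a = ∫ _ in a..b, f a := by simp
    _ ≤ ∫ x in a..b, f x := intervalIntegral.integral_mono_on hab intervalIntegrable_const hfi
        fun x hx ↦ hf (left_mem_Icc.2 hab) hx hx.1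

theorem MonotoneOn.intervalIntegral_le_mul {f : ℝ → ℝ} {a b : ℝ} (hf : MonotoneOn f (Icc a b))
    (hab : a ≤ b) : ∫ x in a..b, f x ≤ (b - a) * f b := by
  have hfi : IntervalIntegrable f volume a b := (hf.mono (uIcc_of_le hab).subset).intervalIntegrable
  calc ∫ x in a..b, f x ≤ ∫ _ in a..b, f b :=
        intervalIntegral.integral_mono_on hab hfi intervalIntegrable_const
          fun x hx ↦ hf hx (right_mem_Icc.2 hab) hx.2
    _ = (b - a) * f b := by simp

theorem AntitoneOn.mul_le_intervalIntegral {f : ℝ → ℝ} {a b : ℝ} (hf : AntitoneOn f (Icc a b))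
    (hab : a ≤ b) : (b - a) * f b ≤ ∫ x in a..b, f x := by
  have := hf.neg.intervalIntegral_le_mul hab
  simp only [intervalIntegral.integral_neg] at this
  linarith

theorem AntitoneOn.intervalIntegral_le_mul {f : ℝ → ℝ} {a b : ℝ} (hf : AntitoneOn f (Icc a b))
    (hab : a ≤ b) : ∫ x in a..b, f x ≤ (b - a) * f a := by
  have := hf.neg.mul_le_intervalIntegral hab
  simp only [intervalIntegral.integral_neg] at this
  linarith

theorem MeasureTheory.IntegrableOn.tendsto_intervalIntegral_zero {E : Type*}
    [NormedAddCommGroup E] [NormedSpace ℝ E] {f : ℝ → E} {a : ℝ} (hf : IntegrableOn f (Ioi a))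
    {ι : Type*} {l : Filter ι} [l.IsCountablyGenerated] {u v : ι → ℝ} (hu : Tendsto u l atTop)
    (hv : Tendsto v l atTop) :
    Tendsto (fun i ↦ ∫ x in u i..v i, f x) l (𝓝 0) := by
  have hlim := (intervalIntegral_tendsto_integral_Ioi a hf hv).sub
    (intervalIntegral_tendsto_integral_Ioi a hf hu)
  rw [sub_self] at hlim
  have hii : ∀ b, a ≤ b → IntervalIntegrable f volume a b := fun b hab ↦
    (intervalIntegrable_iff_integrableOn_Ioc_of_le hab).2 (hf.mono_set Ioc_subset_Ioi_self)
  refine hlim.congr' ?_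
  filter_upwards [hu.eventually_ge_atTop a, hv.eventually_ge_atTop a] with i hui hvi
  exact intervalIntegral.integral_interval_sub_left (hii _ hvi) (hii _ hui)

theorem AntitoneOn.tendsto_mul_atTop_of_integrableOn {f : ℝ → ℝ} {a : ℝ}
    (hanti : AntitoneOn f (Ici a)) (hf : IntegrableOn f (Ioi a)) :
    Tendsto (fun t ↦ t * f t) atTop (𝓝 0) := by
  have hIcc : ∀ b c, a ≤ b → b ≤ c → AntitoneOn f (Icc b c) := fun b c hab hbc ↦
    hanti.mono ((Icc_subset_Ici_iff hbc).2 hab)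
  have hlower := hf.tendsto_intervalIntegral_zero tendsto_id (tendsto_id.const_mul_atTop two_pos)
  have hupper := (hlower.comp (tendsto_id.atTop_div_const two_pos)).const_mul 2
  rw [mul_zero] at hupper
  refine tendsto_of_tendsto_of_tendsto_of_le_of_le' hlower hupper ?_ ?_
  · filter_upwards [eventually_ge_atTop (max a 0)] with t ht
    rw [max_le_iff] at ht
    have := (hIcc t (2 * t) ht.1 (by linarith)).intervalIntegral_le_mul (by linarith)
    simp only [id] at this ⊢
    linarith
  · filter_upwards [eventually_ge_atTop (2 * max a 0)] with t ht
    rw [← le_div_iff₀' two_pos, max_le_iff] at ht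
    have := (hIcc (t / 2) t ht.1 (by linarith)).mul_le_intervalIntegral (by linarith)
    simp only [Function.comp, id, mul_div_cancel₀ t two_ne_zero]
    linarith

theorem MonotoneOn.intervalIntegrable_of_le {g : ℝ → ℝ} {a b : ℝ} (hg : MonotoneOn g (Ici a))
    (hab : a ≤ b) : IntervalIntegrable g volume a b :=
  (hg.mono (by simp [uIcc_of_le hab, Icc_subset_Ici_self])).intervalIntegrable

theorem MonotoneOn.mul_le_intervalIntegral_sub {g : ℝ → ℝ} {a u v : ℝ}
    (hg : MonotoneOn g (Ici a)) (hu : a ≤ u) (huv : u ≤ v) :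
    (v - u) * g u ≤ (∫ x in a..v, g x) - ∫ x in a..u, g x := by
  rw [intervalIntegral.integral_interval_sub_left (hg.intervalIntegrable_of_le (hu.trans huv))
    (hg.intervalIntegrable_of_le hu)]
  exact (hg.mono ((Icc_subset_Ici_iff huv).2 hu)).mul_le_intervalIntegral huv

theorem MonotoneOn.monotoneOn_intervalIntegral {g : ℝ → ℝ} {a c : ℝ} (hg : MonotoneOn g (Ici a))
    (hac : a ≤ c) (hgc : 0 ≤ g c) : MonotoneOn (fun s ↦ ∫ x in a..s, g x) (Ici c) := by
  intro u hu v _ huv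
  have hgu : 0 ≤ g u := hgc.trans (hg hac (hac.trans hu) hu)
  have := hg.mul_le_intervalIntegral_sub (hac.trans hu) huv
  nlinarith [mul_nonneg (sub_nonneg.2 huv) hgu]

theorem MonotoneOn.tendsto_intervalIntegral_atTop {g : ℝ → ℝ} {a c : ℝ}
    (hg : MonotoneOn g (Ici a)) (hac : a ≤ c) (hgc : 0 < g c) :
    Tendsto (fun s ↦ ∫ x in a..s, g x) atTop atTop := by
  have hlin : Tendsto (fun s ↦ (s - c) * g c + ∫ x in a..c, g x) atTop atTop :=
    tendsto_atTop_add_const_right _ _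
      ((tendsto_atTop_add_const_right _ (-c) tendsto_id).atTop_mul_const hgc)
  refine tendsto_atTop_mono' _ ?_ hlin
  filter_upwards [eventually_ge_atTop c] with s hs
  linarith [hg.mul_le_intervalIntegral_sub hac hs]

theorem tendsto_div_sqrt_of_integrableOn_one_div_sqrt {G : ℝ → ℝ} {c r₀ : ℝ}
    (hpos : ∀ s ∈ Ici c, 0 < G s) (hmono : MonotoneOn G (Ici c))
    (hKO : IntegrableOn (fun s ↦ 1 / √(G s)) (Ioi r₀)) :
    Tendsto (fun s ↦ s / √(G s)) atTop (𝓝 0) := by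
  have hanti : AntitoneOn (fun s ↦ 1 / √(G s)) (Ici (max c r₀)) := by
    intro u hu v hv huv
    have hu' : u ∈ Ici c := le_of_max_le_left (mem_Ici.1 hu)
    exact one_div_le_one_div_of_le (Real.sqrt_pos.2 (hpos u hu'))
      (Real.sqrt_le_sqrt (hmono hu' (le_of_max_le_left (mem_Ici.1 hv)) huv))
  simpa only [mul_one_div] using
    hanti.tendsto_mul_atTop_of_integrableOn (hKO.mono_set (Ioi_subset_Ioi (le_max_right c r₀)))

theorem div_le_div_sqrt_sq {s a b : ℝ} (ha : 0 < a) (hb : 0 < b) (h : b ≤ s * a) :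
    s / a ≤ (s / √b) ^ 2 := by
  have hs : 0 < s := pos_of_mul_pos_left (hb.trans_le h) ha.le
  rw [div_pow, Real.sq_sqrt hb.le, div_le_div_iff₀ ha hb]
  nlinarith

theorem sqrt_div_le_div_sqrt {s a b : ℝ} (ha : 0 < a) (hb : 0 < b) (h : b ≤ s * a) :
    √b / a ≤ s / √b := by
  rw [div_le_div_iff₀ ha (Real.sqrt_pos.2 hb), Real.mul_self_sqrt hb.le]
  exact h

theorem stmt_6_general (g : ℝ → ℝ)
    (hg_mono : MonotoneOn g (Ici 0))
    (hg_eventually_pos : ∃ s₁ : ℝ, ∀ s ≥ s₁, 0 < g s)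
    (G : ℝ → ℝ) (hG : ∀ s, G s = ∫ τ in (0:ℝ)..s, g τ)
    (r₀ : ℝ)
    (hKO : IntegrableOn (fun s => 1 / Real.sqrt (G s)) (Ioi r₀)) :
    Tendsto (fun s => s / Real.sqrt (G s)) atTop (nhds 0) ∧
    Tendsto (fun s => s / g s) atTop (nhds 0) ∧
    Tendsto (fun s => Real.sqrt (G s) / g s) atTop (nhds 0) := by
  obtain ⟨s₁, hs₁⟩ := hg_eventually_pos
  have hpos : ∀ s ≥ max s₁ 0, 0 ≤ s ∧ 0 < g s := fun s hs ↦
    ⟨(le_max_right _ _).trans hs, hs₁ s ((le_max_left _ _).trans hs)⟩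
  have hGlim : Tendsto G atTop atTop := by
    simpa only [← funext hG] using
      hg_mono.tendsto_intervalIntegral_atTop (hpos _ le_rfl).1 (hpos _ le_rfl).2
  obtain ⟨c, hc⟩ := (hGlim.eventually_gt_atTop 0).and (eventually_ge_atTop (max s₁ 0))
    |>.exists_forall_of_atTop
  have hGmono : MonotoneOn G (Ici c) := by
    obtain ⟨hc₀, hgc⟩ := hpos c (hc c le_rfl).2
    simpa only [← funext hG] using hg_mono.monotoneOn_intervalIntegral hc₀ hgc.le
  have h₁ := tendsto_div_sqrt_of_integrableOn_one_div_sqrt (fun s hs ↦ (hc s hs).1) hGmono hKO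
  have hbounds : ∀ᶠ s in atTop, 0 ≤ s ∧ 0 < g s ∧ 0 < G s ∧ G s ≤ s * g s := by
    filter_upwards [eventually_ge_atTop c] with s hs
    obtain ⟨hs₀, hgs⟩ := hpos s (hc s hs).2
    refine ⟨hs₀, hgs, (hc s hs).1, ?_⟩
    simpa only [hG, sub_zero] using (hg_mono.mono Icc_subset_Ici_self).intervalIntegral_le_mul hs₀
  refine ⟨h₁, ?_, ?_⟩
  · refine squeeze_zero' (hbounds.mono fun s ⟨hs, hgs, _⟩ ↦ div_nonneg hs hgs.le)
      (hbounds.mono fun s ⟨_, hgs, hGs, hle⟩ ↦ div_le_div_sqrt_sq hgs hGs hle) ?_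
    simpa using h₁.pow 2
  · exact squeeze_zero' (hbounds.mono fun s ⟨_, hgs, _⟩ ↦ div_nonneg (Real.sqrt_nonneg _) hgs.le)
      (hbounds.mono fun s ⟨_, hgs, hGs, hle⟩ ↦ sqrt_div_le_div_sqrt hgs hGs hle) h₁

/-- Keller–Osserman implies s/√G(s) → 0, s/g(s) → 0 and √G(s)/g(s) → 0 as s → ∞. -/
theorem stmt_6 (g : ℝ → ℝ)
    (hg_cont : ContinuousOn g (Ici 0))
    (hg_mono : MonotoneOn g (Ici 0))
    (hg_nonneg : ∀ s ∈ Ici (0:ℝ), 0 ≤ g s)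
    (hg_eventually_pos : ∃ s₁ : ℝ, ∀ s ≥ s₁, 0 < g s)
    (G : ℝ → ℝ) (hG : ∀ s, G s = ∫ τ in (0:ℝ)..s, g τ)
    (r₀ : ℝ) (hr₀ : 0 < r₀)
    (hKO : IntegrableOn (fun s => 1 / Real.sqrt (G s)) (Ioi r₀)) :
    Tendsto (fun s => s / Real.sqrt (G s)) atTop (nhds 0) ∧
    Tendsto (fun s => s / g s) atTop (nhds 0) ∧
    Tendsto (fun s => Real.sqrt (G s) / g s) atTop (nhds 0) :=
  stmt_6_general g hg_mono hg_eventually_pos G hG r₀ hKO
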